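/- Let (Ω,𝔉,m) be a probability space and let 𝔔 : L¹(m) → L¹(m) be a linear operator that is positive (F ≥ 0 implies 𝔔F ≥ 0) and integral-preserving (∫𝔔F dm = ∫F dm for every F ∈ L¹(m)). Suppose there exists γ ∈ (0,1] such that 𝔔F ≥ γ m-a.e. for every probability density F (i.e., every F ≥ 0 with ∫F dm = 1). Then there exists a unique probability density H* with 𝔔H* = H*; moreover H* > 0 m-a.e., and there exist constants γ₄ ∈ (0,1) and γ₅ > 0 such that ∫|𝔔ⁿF − H*| dm ≤ γ₅ γ₄ⁿ for every probability density F and every n ≥ 1 (one may take γ₄ = 1−γ and γ₅ = 2). -/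

import Mathlib

/-!
Doeblin's condition makes `Q` a strict contraction of the closed set of probability densities
in `L¹`. For densities `F, G` write `F - G = D⁺ - D⁻`, where `∫ D⁺ = ∫ D⁻ = c`. Both `Q D⁺` and
`Q D⁻` lie above the constant `γ c`, which cancels in their difference, so
`‖Q F - Q G‖ ≤ 2 (c - γ c) = (1 - γ) ‖F - G‖`. Banach's fixed point theorem then gives the unique
invariant density `H` and the geometric rate, and `H = Q H ≥ γ` gives positivity.
-/

open MeasureTheory Function Set

namespace MeasureTheory.L1

variable {Ω : Type*} [MeasurableSpace Ω] {m : Measure Ω}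

lemma integral_coeFn_sub (f g : Lp ℝ 1 m) :
    ∫ ω, (f - g : Lp ℝ 1 m) ω ∂m = ∫ ω, f ω ∂m - ∫ ω, g ω ∂m := by
  simp only [← L1.integral_eq_integral, L1.integral_sub]

lemma integral_coeFn_add (f g : Lp ℝ 1 m) :
    ∫ ω, (f + g : Lp ℝ 1 m) ω ∂m = ∫ ω, f ω ∂m + ∫ ω, g ω ∂m := by
  simp only [← L1.integral_eq_integral, L1.integral_add]

lemma norm_eq_integral_abs (f : Lp ℝ 1 m) : ‖f‖ = ∫ ω, |f ω| ∂m := by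
  simp only [L1.norm_eq_integral_norm, Real.norm_eq_abs]

lemma norm_eq_integral_of_nonneg {f : Lp ℝ 1 m} (hf : 0 ≤ f) : ‖f‖ = ∫ ω, f ω ∂m := by
  rw [norm_eq_integral_abs]
  refine integral_congr_ae ?_
  filter_upwards [(Lp.coeFn_nonneg f).2 hf] with ω hω using abs_of_nonneg hω

lemma norm_eq_integral_posPart_add_integral_negPart (f : Lp ℝ 1 m) :
    ‖f‖ = ∫ ω, (f⁺ : Lp ℝ 1 m) ω ∂m + ∫ ω, (f⁻ : Lp ℝ 1 m) ω ∂m := by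
  rw [← norm_abs_eq_norm, ← posPart_add_negPart,
    norm_eq_integral_of_nonneg (add_nonneg (posPart_nonneg f) (negPart_nonneg f)),
    integral_coeFn_add]

lemma dist_eq_integral_abs_sub (f g : Lp ℝ 1 m) : dist f g = ∫ ω, |f ω - g ω| ∂m := by
  rw [dist_eq_norm, norm_eq_integral_abs]
  refine integral_congr_ae ?_
  filter_upwards [Lp.coeFn_sub f g] with ω hω
  rw [hω, Pi.sub_apply]

lemma integral_coeFn_const [IsProbabilityMeasure m] (c : ℝ) :
    ∫ ω, (Lp.const 1 m c : Lp ℝ 1 m) ω ∂m = c := by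
  rw [integral_congr_ae (Lp.coeFn_const 1 m c)]
  simp

end MeasureTheory.L1

section MarkovOperator

variable {Ω : Type*} [MeasurableSpace Ω] {m : Measure Ω}

/-- Lasota–Mackey's terminology for a positive, integral-preserving operator on `L¹`. -/
structure IsMarkovOperator (Q : Lp ℝ 1 m →ₗ[ℝ] Lp ℝ 1 m) : Prop where
  map_nonneg : ∀ F : Lp ℝ 1 m, 0 ≤ F → 0 ≤ Q F
  integral_map : ∀ F : Lp ℝ 1 m, ∫ ω, (Q F : Ω → ℝ) ω ∂m = ∫ ω, (F : Ω → ℝ) ω ∂m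

variable (m) in
def probDensities : Set (Lp ℝ 1 m) := {F | 0 ≤ F ∧ ∫ ω, (F : Ω → ℝ) ω ∂m = 1}

def DoeblinLowerBound (Q : Lp ℝ 1 m →ₗ[ℝ] Lp ℝ 1 m) (γ : ℝ) : Prop :=
  ∀ F ∈ probDensities m, ∀ᵐ ω ∂m, γ ≤ (Q F : Ω → ℝ) ω

lemma isClosed_probDensities : IsClosed (probDensities m) :=
  (isClosed_le continuous_const continuous_id : IsClosed {F : Lp ℝ 1 m | 0 ≤ F}).inter
    (isClosed_eq MeasureTheory.continuous_integral continuous_const)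

lemma dist_le_two_of_mem_probDensities {F G : Lp ℝ 1 m} (hF : F ∈ probDensities m)
    (hG : G ∈ probDensities m) : dist F G ≤ 2 := by
  calc dist F G ≤ ‖F‖ + ‖G‖ := dist_le_norm_add_norm F G
    _ = 2 := by
      rw [L1.norm_eq_integral_of_nonneg hF.1, L1.norm_eq_integral_of_nonneg hG.1, hF.2, hG.2]
      norm_num

lemma const_one_mem_probDensities [IsProbabilityMeasure m] :
    Lp.const 1 m (1 : ℝ) ∈ probDensities m := by
  refine ⟨?_, L1.integral_coeFn_const 1⟩
  rw [← Lp.coeFn_nonneg]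
  filter_upwards [Lp.coeFn_const 1 m (1 : ℝ)] with ω hω
  simp

namespace IsMarkovOperator

variable {Q : Lp ℝ 1 m →ₗ[ℝ] Lp ℝ 1 m}

lemma mapsTo_probDensities (hQ : IsMarkovOperator Q) :
    MapsTo Q (probDensities m) (probDensities m) :=
  fun F hF => ⟨hQ.map_nonneg F hF.1, (hQ.integral_map F).trans hF.2⟩

lemma const_le_map [IsProbabilityMeasure m] {γ : ℝ}
    (hQ : IsMarkovOperator Q) (hlb : DoeblinLowerBound Q γ)
    {F : Lp ℝ 1 m} (hF : 0 ≤ F) : Lp.const 1 m (γ * ∫ ω, F ω ∂m) ≤ Q F := by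
  set c := ∫ ω, F ω ∂m
  have hc0 : 0 ≤ c := integral_nonneg_of_ae ((Lp.coeFn_nonneg F).2 hF)
  rcases hc0.eq_or_lt with hc | hc
  · rw [← hc, mul_zero, map_zero]
    exact hQ.map_nonneg F hF
  have hdens : c⁻¹ • F ∈ probDensities m := by
    refine ⟨(Lp.coeFn_nonneg _).1 ?_, ?_⟩
    · filter_upwards [Lp.coeFn_smul c⁻¹ F, (Lp.coeFn_nonneg F).2 hF] with ω hsmul hω
      simpa [hsmul] using mul_nonneg (inv_nonneg.2 hc.le) hω
    rw [← L1.integral_eq_integral, L1.integral_smul, L1.integral_eq_integral, smul_eq_mul,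
      inv_mul_cancel₀ hc.ne']
  have hQF : Q F = c • Q (c⁻¹ • F) := by rw [← map_smul, smul_inv_smul₀ hc.ne']
  rw [← Lp.coeFn_le, hQF]
  filter_upwards [Lp.coeFn_const 1 m (γ * c), hlb _ hdens, Lp.coeFn_smul c (Q (c⁻¹ • F))]
    with ω hconst hγ hsmul
  rw [hconst, hsmul, Function.const_apply, Pi.smul_apply, smul_eq_mul, mul_comm]
  exact mul_le_mul_of_nonneg_left hγ hc.le

lemma dist_map_le [IsProbabilityMeasure m] {γ : ℝ}
    (hQ : IsMarkovOperator Q) (hlb : DoeblinLowerBound Q γ)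
    {F G : Lp ℝ 1 m} (hF : F ∈ probDensities m) (hG : G ∈ probDensities m) :
    dist (Q F) (Q G) ≤ (1 - γ) * dist F G := by
  set D := F - G
  set c := ∫ ω, (D⁺ : Lp ℝ 1 m) ω ∂m
  have hD : D⁺ - D⁻ = D := posPart_sub_negPart D
  have hc : ∫ ω, (D⁻ : Lp ℝ 1 m) ω ∂m = c := by
    have h := L1.integral_coeFn_sub D⁺ D⁻
    rw [hD, L1.integral_coeFn_sub, hF.2, hG.2, sub_self] at h
    linarith
  have hdist : dist F G = 2 * c := by
    rw [dist_eq_norm, L1.norm_eq_integral_posPart_add_integral_negPart, hc, two_mul]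
  set k := Lp.const 1 m (γ * c)
  have hk_pos : k ≤ Q D⁺ := hQ.const_le_map hlb (posPart_nonneg D)
  have hk_neg : k ≤ Q D⁻ := by simpa only [hc] using hQ.const_le_map hlb (negPart_nonneg D)
  have hnorm : ∀ X, k ≤ Q X → ‖Q X - k‖ = ∫ ω, X ω ∂m - γ * c := fun X hX => by
    rw [L1.norm_eq_integral_of_nonneg (sub_nonneg.2 hX), L1.integral_coeFn_sub, hQ.integral_map,
      L1.integral_coeFn_const]
  calc dist (Q F) (Q G) = ‖(Q D⁺ - k) - (Q D⁻ - k)‖ := by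
        rw [dist_eq_norm, sub_sub_sub_cancel_right, ← map_sub, ← map_sub, hD]
    _ ≤ ‖Q D⁺ - k‖ + ‖Q D⁻ - k‖ := norm_sub_le _ _
    _ = (1 - γ) * dist F G := by rw [hnorm _ hk_pos, hnorm _ hk_neg, hc, hdist]; ring

lemma dist_iterate_le [IsProbabilityMeasure m] {γ : ℝ}
    (hQ : IsMarkovOperator Q) (hlb : DoeblinLowerBound Q γ)
    (hγ1 : γ ≤ 1) {F G : Lp ℝ 1 m} (hF : F ∈ probDensities m) (hG : G ∈ probDensities m)
    (n : ℕ) : dist (Q^[n] F) (Q^[n] G) ≤ (1 - γ) ^ n * dist F G := by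
  induction n with
  | zero => simp
  | succ n ih =>
    rw [iterate_succ_apply', iterate_succ_apply', pow_succ', mul_assoc]
    calc dist (Q (Q^[n] F)) (Q (Q^[n] G)) ≤ (1 - γ) * dist (Q^[n] F) (Q^[n] G) :=
          hQ.dist_map_le hlb (hQ.mapsTo_probDensities.iterate n hF)
            (hQ.mapsTo_probDensities.iterate n hG)
      _ ≤ (1 - γ) * ((1 - γ) ^ n * dist F G) := by gcongr

lemma exists_fixedPoint_mem_probDensities [IsProbabilityMeasure m] {γ : ℝ}
    (hQ : IsMarkovOperator Q) (hlb : DoeblinLowerBound Q γ)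
    (hγ0 : 0 < γ) (hγ1 : γ ≤ 1) :
    ∃ H ∈ probDensities m, Q H = H ∧ ∀ H' ∈ probDensities m, Q H' = H' → H' = H := by
  have : Nonempty (probDensities m) := ⟨⟨_, const_one_mem_probDensities⟩⟩
  have : CompleteSpace (probDensities m) := isClosed_probDensities.completeSpace_coe
  have hT : ContractingWith (1 - γ).toNNReal (hQ.mapsTo_probDensities.restrict Q _ _) := by
    refine ⟨Real.toNNReal_lt_one.2 (by linarith), LipschitzWith.of_dist_le_mul fun F G => ?_⟩
    rw [Real.coe_toNNReal _ (by linarith)]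
    exact hQ.dist_map_le hlb F.2 G.2
  set H := ContractingWith.fixedPoint _ hT
  refine ⟨H, H.2, congrArg Subtype.val hT.fixedPoint_isFixedPt, fun H' hH' hQH' => ?_⟩
  exact congrArg Subtype.val (hT.fixedPoint_unique (x := ⟨H', hH'⟩) (Subtype.ext hQH'))

end IsMarkovOperator

end MarkovOperator

/-- Theorem 4.7 / Lemma 4.8, via the Doeblin-type criterion of
Lasota–Mackey: let `𝔔 : L¹(m) → L¹(m)` be a positive, integral-preserving linear operator
on a probability space `(Ω, 𝔉, m)` such that `𝔔F ≥ γ` a.e. for every probability density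
`F`, for some `γ ∈ (0,1]`.  Then there is a unique probability density `H*` with
`𝔔H* = H*`; moreover `H* > 0` a.e., and there are constants `γ₄ ∈ (0,1)`, `γ₅ > 0`
(one may take `γ₄ = 1 − γ`, `γ₅ = 2`) with `∫ |𝔔ⁿF − H*| dm ≤ γ₅ γ₄ⁿ` for every
probability density `F` and every `n ≥ 1`. -/
theorem stmt_8 {Ω : Type*} [MeasurableSpace Ω] (m : Measure Ω) [IsProbabilityMeasure m]
    (Q : Lp ℝ 1 m →ₗ[ℝ] Lp ℝ 1 m)
    (hpos : ∀ F : Lp ℝ 1 m, 0 ≤ F → 0 ≤ Q F)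
    (hint : ∀ F : Lp ℝ 1 m, ∫ ω, (Q F : Ω → ℝ) ω ∂m = ∫ ω, (F : Ω → ℝ) ω ∂m)
    (γ : ℝ) (hγ0 : 0 < γ) (hγ1 : γ ≤ 1)
    (hlb : ∀ F : Lp ℝ 1 m, 0 ≤ F → ∫ ω, (F : Ω → ℝ) ω ∂m = 1 →
      ∀ᵐ ω ∂m, γ ≤ (Q F : Ω → ℝ) ω) :
    ∃ H : Lp ℝ 1 m,
      (0 ≤ H ∧ ∫ ω, (H : Ω → ℝ) ω ∂m = 1 ∧ Q H = H) ∧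
      (∀ᵐ ω ∂m, 0 < (H : Ω → ℝ) ω) ∧
      (∀ H' : Lp ℝ 1 m, 0 ≤ H' → ∫ ω, (H' : Ω → ℝ) ω ∂m = 1 → Q H' = H' → H' = H) ∧
      ∃ γ₄ γ₅ : ℝ, γ₄ ∈ Set.Ioo (0:ℝ) 1 ∧ 0 < γ₅ ∧
        ∀ F : Lp ℝ 1 m, 0 ≤ F → ∫ ω, (F : Ω → ℝ) ω ∂m = 1 →
        ∀ n : ℕ, 1 ≤ n →
          ∫ ω, |(((⇑Q)^[n] F : Lp ℝ 1 m) : Ω → ℝ) ω - (H : Ω → ℝ) ω| ∂m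
            ≤ γ₅ * γ₄ ^ n := by
  have hQ : IsMarkovOperator Q := ⟨hpos, hint⟩
  have hdoeblin : DoeblinLowerBound Q γ := fun F hF => hlb F hF.1 hF.2
  obtain ⟨H, hH, hQH, hunique⟩ := hQ.exists_fixedPoint_mem_probDensities hdoeblin hγ0 hγ1
  -- `1 - γ` itself would do, except that it vanishes when `γ = 1`.
  refine ⟨H, ⟨hH.1, hH.2, hQH⟩, ?_, fun H' hH'0 hH'1 => hunique H' ⟨hH'0, hH'1⟩,
    1 - γ / 2, 2, ⟨by linarith, by linarith⟩, two_pos, fun F hF0 hF1 n _ => ?_⟩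
  · filter_upwards [hdoeblin H hH] with ω hω
    exact hγ0.trans_le (hQH ▸ hω)
  · rw [← L1.dist_eq_integral_abs_sub, ← iterate_fixed hQH n]
    calc dist (Q^[n] F) (Q^[n] H) ≤ (1 - γ) ^ n * dist F H :=
          hQ.dist_iterate_le hdoeblin hγ1 ⟨hF0, hF1⟩ hH n
      _ ≤ (1 - γ / 2) ^ n * 2 :=
          mul_le_mul (pow_le_pow_left₀ (by linarith) (by linarith) n)
            (dist_le_two_of_mem_probDensities ⟨hF0, hF1⟩ hH) dist_nonneg
            (pow_nonneg (by linarith) n)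
      _ = 2 * (1 - γ / 2) ^ n := mul_comm _ _
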